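/- arXiv:1905.04559 — 3 statements merged into one kernel-verified Lean document; each statement's English description precedes it below -/
import Mathlib

section
/- The function f(θ,θ₁,θ₂,θ₃) = θ^(1+ρ₁+ρ₂+ρ₃) · θ₁^(−ρ₁) · θ₂^(−ρ₂) · θ₃^(−ρ₃) is convex on the positive orthant (θ,θ₁,θ₂,θ₃) ∈ ℝ⁴₊ for any fixed nonnegative exponents ρ₁, ρ₂, ρ₃ ≥ 0. -/
/-! `f` is positively homogeneous of degree one, so its tangent plane at a point `z` of the
orthant passes through the origin: it is the linear form
`ℓ_z(x) = f(z) * (p * x₀ / z₀ - ∑ ρᵢ * xᵢ / zᵢ)` with `p = 1 + ∑ ρᵢ`. Weighted AM–GM with weights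
`1/p` and `ρᵢ/p`, applied to `f(x)/f(z)` and the ratios `xᵢ/zᵢ` (whose weighted geometric mean is
`x₀/z₀`), gives `ℓ_z ≤ f` on the orthant. A function touched at every point by a linear minorant
is convex. -/

open Finset Real

theorem convexOn_of_supporting_linearMap {𝕜 E : Type*} [Semiring 𝕜] [PartialOrder 𝕜]
    [IsOrderedRing 𝕜] [AddCommMonoid E] [Module 𝕜 E] {s : Set E} {f : E → 𝕜}
    (hs : Convex 𝕜 s) (ℓ : E → E →ₗ[𝕜] 𝕜) (hℓ_le : ∀ z ∈ s, ∀ x ∈ s, ℓ z x ≤ f x)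
    (hℓ_eq : ∀ z ∈ s, ℓ z z = f z) : ConvexOn 𝕜 s f := by
  refine ⟨hs, fun x hx y hy a b ha hb hab => ?_⟩
  have hz := hs hx hy ha hb hab
  calc f (a • x + b • y) = a • ℓ (a • x + b • y) x + b • ℓ (a • x + b • y) y := by
        rw [← hℓ_eq _ hz, map_add, map_smul, map_smul]
    _ ≤ a • f x + b • f y := by
        gcongr <;> apply hℓ_le <;> assumption

section

variable {ι : Type*} [Fintype ι]

theorem mul_le_rpow_mul_prod_rpow_neg_add_sum {ρ u : ι → ℝ} {u₀ : ℝ}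
    (hρ : ∀ i, 0 ≤ ρ i) (hu₀ : 0 < u₀) (hu : ∀ i, 0 < u i) :
    (1 + ∑ i, ρ i) * u₀ ≤ u₀ ^ (1 + ∑ i, ρ i) * ∏ i, u i ^ (-ρ i) + ∑ i, ρ i * u i := by
  set p := 1 + ∑ i, ρ i
  have hp : 0 < p := by have := sum_nonneg fun i (_ : i ∈ univ) => hρ i; positivity
  set v := u₀ ^ p * ∏ i, u i ^ (-ρ i)
  have hv : 0 < v := mul_pos (by positivity) (prod_pos fun i _ => rpow_pos_of_pos (hu i) _)
  have amgm := geom_mean_le_arith_mean_weighted univ (Option.elim' p⁻¹ fun i => ρ i / p)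
    (Option.elim' v u) ?_ ?_ ?_
  · simp only [Fintype.prod_option, Fintype.sum_option, Option.elim'] at amgm
    have hgeom : v ^ p⁻¹ * ∏ i, u i ^ (ρ i / p) = u₀ := by
      rw [mul_rpow (by positivity) (prod_nonneg fun i _ => rpow_nonneg (hu i).le _),
        rpow_rpow_inv hu₀.le hp.ne', ← finsetProd_rpow _ _ (fun i _ => rpow_nonneg (hu i).le _),
        mul_assoc, ← prod_mul_distrib, prod_eq_one fun i _ => ?_, mul_one]
      rw [← rpow_mul (hu i).le, ← rpow_add (hu i), show -ρ i * p⁻¹ + ρ i / p = 0 by ring,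
        rpow_zero]
    rw [hgeom] at amgm
    calc p * u₀ ≤ p * (p⁻¹ * v + ∑ i, ρ i / p * u i) := by gcongr
      _ = v + ∑ i, ρ i * u i := by
        rw [mul_add, mul_sum, ← mul_assoc, mul_inv_cancel₀ hp.ne', one_mul]
        congr 1
        exact sum_congr rfl fun i _ => by field_simp
  · rintro (_ | i) _
    exacts [inv_nonneg.2 hp.le, div_nonneg (hρ i) hp.le]
  · simp only [Fintype.sum_option, Option.elim', ← sum_div]
    field_simp
    rfl
  · rintro (_ | i) _
    exacts [hv.le, (hu i).le]

noncomputable def rpowProd (ρ : ι → ℝ) (x : ℝ × (ι → ℝ)) : ℝ :=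
  x.1 ^ (1 + ∑ i, ρ i) * ∏ i, x.2 i ^ (-ρ i)

theorem rpowProd_pos (ρ : ι → ℝ) {x : ℝ × (ι → ℝ)} (hx₀ : 0 < x.1) (hx : ∀ i, 0 < x.2 i) :
    0 < rpowProd ρ x :=
  mul_pos (rpow_pos_of_pos hx₀ _) (prod_pos fun i _ => rpow_pos_of_pos (hx i) _)

theorem rpowProd_mul_sub_sum_le {ρ : ι → ℝ} (hρ : ∀ i, 0 ≤ ρ i) {x z : ℝ × (ι → ℝ)}
    (hx₀ : 0 < x.1) (hx : ∀ i, 0 < x.2 i) (hz₀ : 0 < z.1) (hz : ∀ i, 0 < z.2 i) :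
    rpowProd ρ z * ((1 + ∑ i, ρ i) / z.1 * x.1 - ∑ i, ρ i / z.2 i * x.2 i) ≤ rpowProd ρ x := by
  have hz_ne : ∀ i, z.2 i ^ (-ρ i) ≠ 0 := fun i => (rpow_pos_of_pos (hz i) _).ne'
  have hscale : rpowProd ρ z * ((x.1 / z.1) ^ (1 + ∑ i, ρ i) *
      ∏ i, (x.2 i / z.2 i) ^ (-ρ i)) = rpowProd ρ x := by
    simp only [rpowProd, div_rpow hx₀.le hz₀.le, fun i => div_rpow (hx i).le (hz i).le,
      prod_div_distrib]
    have := prod_ne_zero_iff.2 fun i (_ : i ∈ univ) => hz_ne i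
    field_simp
  calc rpowProd ρ z * ((1 + ∑ i, ρ i) / z.1 * x.1 - ∑ i, ρ i / z.2 i * x.2 i)
      = rpowProd ρ z * ((1 + ∑ i, ρ i) * (x.1 / z.1) - ∑ i, ρ i * (x.2 i / z.2 i)) := by
        simp only [div_mul_eq_mul_div, mul_div_assoc]
    _ ≤ rpowProd ρ z * ((x.1 / z.1) ^ (1 + ∑ i, ρ i) * ∏ i, (x.2 i / z.2 i) ^ (-ρ i)) := by
        have := mul_le_rpow_mul_prod_rpow_neg_add_sum hρ (div_pos hx₀ hz₀)
          fun i => div_pos (hx i) (hz i)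
        gcongr
        · exact (rpowProd_pos ρ hz₀ hz).le
        · linarith
    _ = rpowProd ρ x := hscale

theorem convexOn_rpowProd {ρ : ι → ℝ} (hρ : ∀ i, 0 ≤ ρ i) :
    ConvexOn ℝ (Set.Ioi 0 ×ˢ Set.univ.pi fun _ => Set.Ioi 0) (rpowProd ρ) := by
  refine convexOn_of_supporting_linearMap
    ((convex_Ioi 0).prod (convex_pi fun _ _ => convex_Ioi 0))
    (fun z => rpowProd ρ z • (((1 + ∑ i, ρ i) / z.1) • LinearMap.fst ℝ ℝ (ι → ℝ) -
      ∑ i, (ρ i / z.2 i) • LinearMap.proj i ∘ₗ LinearMap.snd ℝ ℝ (ι → ℝ))) ?_ ?_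
  · rintro z ⟨hz₀, hz⟩ x ⟨hx₀, hx⟩
    simp only [Set.mem_Ioi, Set.mem_pi, Set.mem_univ, true_implies] at hz₀ hz hx₀ hx
    simpa using rpowProd_mul_sub_sum_le hρ hx₀ hx hz₀ hz
  · rintro z ⟨hz₀, hz⟩
    simp only [Set.mem_Ioi, Set.mem_pi, Set.mem_univ, true_implies] at hz₀ hz
    simp [div_mul_cancel₀ _ hz₀.ne', fun i => div_mul_cancel₀ (ρ i) (hz i).ne']

end

theorem convexity_of_f (ρ₁ ρ₂ ρ₃ : ℝ) (h₁ : 0 ≤ ρ₁) (h₂ : 0 ≤ ρ₂) (h₃ : 0 ≤ ρ₃) :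
    ConvexOn ℝ {x : ℝ × ℝ × ℝ × ℝ | 0 < x.1 ∧ 0 < x.2.1 ∧ 0 < x.2.2.1 ∧ 0 < x.2.2.2}
      (fun x : ℝ × ℝ × ℝ × ℝ =>
        x.1 ^ (1 + ρ₁ + ρ₂ + ρ₃) * x.2.1 ^ (-ρ₁) * x.2.2.1 ^ (-ρ₂) * x.2.2.2 ^ (-ρ₃)) := by
  let L : ℝ × ℝ × ℝ × ℝ →ₗ[ℝ] ℝ × (Fin 3 → ℝ) :=
    { toFun := fun x => (x.1, ![x.2.1, x.2.2.1, x.2.2.2])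
      map_add' := fun _ _ => Prod.ext rfl (funext fun i => by fin_cases i <;> rfl)
      map_smul' := fun _ _ => Prod.ext rfl (funext fun i => by fin_cases i <;> rfl) }
  have hρ : ∀ i, 0 ≤ ![ρ₁, ρ₂, ρ₃] i := by simp [Fin.forall_fin_succ, h₁, h₂, h₃]
  have hconvex := (convexOn_rpowProd hρ).comp_linearMap L
  have hdom : L ⁻¹' (Set.Ioi 0 ×ˢ Set.univ.pi fun _ => Set.Ioi 0) =
      {x | 0 < x.1 ∧ 0 < x.2.1 ∧ 0 < x.2.2.1 ∧ 0 < x.2.2.2} := by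
    ext x
    simp [L, Fin.forall_fin_succ]
  rw [hdom] at hconvex
  refine hconvex.congr fun x _ => ?_
  simp only [LinearMap.coe_mk, AddHom.coe_mk, Function.comp_apply, rpowProd, Fin.sum_univ_three,
    Fin.prod_univ_three, Matrix.cons_val_zero, Matrix.cons_val_one, Matrix.cons_val, L, ← add_assoc]
  ring
end

section
/- Let α, β, γA, γB be positive reals and μ*, ν*, η* reals with min(μ*,ν*) ≥ η* ≥ 0, satisfying α^(1+μ*+ν*−η*) · γA^(−μ*+η*) · γB^(−ν*+η*) · β^(−η*) ≤ 1. Suppose additionally that for some N > 1, λ > 0, δ > 0: α ≥ N^(max(1,δ)−λ), α/γA ≥ N^(1−λ), α/γB ≥ N^(δ−λ), and α/β ≥ N^(1+δ−λ). Then λ ≥ (max(1,δ) + μ* + δ·ν*)/(1 + μ* + ν* − η*). -/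
/-!
Take logarithms base `N`. Each lower bound on `α`, `α / γA`, `α / γB`, `α / β` becomes a linear
lower bound on its logarithm, and the hypothesis on `α, β, γA, γB` says that the combination of
these four logarithms with the nonnegative weights `1, μ - η, ν - η, η` is nonpositive. Adding up
the four bounds with the same weights gives
`max 1 δ + μ + δ ν - λ (1 + μ + ν - η) ≤ 0`.
-/

open Real

lemma mul_log_le_log_of_rpow_le {N x e : ℝ} (hN : 0 < N) (h : N ^ e ≤ x) :
    e * log N ≤ log x := by
  rw [← log_rpow hN]
  exact log_le_log (by positivity) h

lemma weighted_log_nonpos_of_prod_rpow_le_one {a b c d p q r s : ℝ}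
    (ha : 0 < a) (hb : 0 < b) (hc : 0 < c) (hd : 0 < d)
    (h : a ^ p * b ^ q * c ^ r * d ^ s ≤ 1) :
    p * log a + q * log b + r * log c + s * log d ≤ 0 := by
  have := log_nonpos (by positivity) h
  rwa [log_mul (by positivity) (by positivity), log_mul (by positivity) (by positivity),
    log_mul (by positivity) (by positivity), log_rpow ha, log_rpow hb, log_rpow hc,
    log_rpow hd] at this

theorem lower_bound_exponent_general (α β γA γB μ ν η N lam δ : ℝ)
    (hα : 0 < α) (hβ : 0 < β) (hγA : 0 < γA) (hγB : 0 < γB)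
    (hη0 : 0 ≤ η) (hημ : η ≤ μ) (hην : η ≤ ν)
    (hkey : α ^ (1 + μ + ν - η) * γA ^ (-μ + η) * γB ^ (-ν + η) * β ^ (-η) ≤ 1)
    (hN : 1 < N)
    (h1 : N ^ (max 1 δ - lam) ≤ α)
    (h2 : N ^ (1 - lam) ≤ α / γA)
    (h3 : N ^ (δ - lam) ≤ α / γB)
    (h4 : N ^ (1 + δ - lam) ≤ α / β) :
    (max 1 δ + μ + δ * ν) / (1 + μ + ν - η) ≤ lam := by
  have hN0 : 0 < N := by linarith
  have hlogN : 0 < log N := log_pos hN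
  have hlogα := mul_log_le_log_of_rpow_le hN0 h1
  have hlogαγA := mul_log_le_log_of_rpow_le hN0 h2
  have hlogαγB := mul_log_le_log_of_rpow_le hN0 h3
  have hlogαβ := mul_log_le_log_of_rpow_le hN0 h4
  rw [log_div hα.ne' hγA.ne'] at hlogαγA
  rw [log_div hα.ne' hγB.ne'] at hlogαγB
  rw [log_div hα.ne' hβ.ne'] at hlogαβ
  have hweighted := weighted_log_nonpos_of_prod_rpow_le_one hα hγA hγB hβ hkey
  have hexponent : (max 1 δ + μ + δ * ν - lam * (1 + μ + ν - η)) * log N ≤ 0 := by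
    linarith [mul_le_mul_of_nonneg_left hlogαγA (sub_nonneg.2 hημ),
      mul_le_mul_of_nonneg_left hlogαγB (sub_nonneg.2 hην), mul_le_mul_of_nonneg_left hlogαβ hη0]
  rw [div_le_iff₀ (by linarith)]
  linarith [nonpos_of_mul_nonpos_left hexponent hlogN]

theorem lower_bound_exponent (α β γA γB μ ν η N lam δ : ℝ)
    (hα : 0 < α) (hβ : 0 < β) (hγA : 0 < γA) (hγB : 0 < γB)
    (hη0 : 0 ≤ η) (hημ : η ≤ μ) (hην : η ≤ ν)
    (hkey : α ^ (1 + μ + ν - η) * γA ^ (-μ + η) * γB ^ (-ν + η) * β ^ (-η) ≤ 1)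
    (hN : 1 < N) (hlam : 0 < lam) (hδ : 0 < δ)
    (h1 : N ^ (max 1 δ - lam) ≤ α)
    (h2 : N ^ (1 - lam) ≤ α / γA)
    (h3 : N ^ (δ - lam) ≤ α / γB)
    (h4 : N ^ (1 + δ - lam) ≤ α / β) :
    (max 1 δ + μ + δ * ν) / (1 + μ + ν - η) ≤ lam :=
  lower_bound_exponent_general α β γA γB μ ν η N lam δ hα hβ hγA hγB hη0 hημ hην hkey hN h1 h2 h3 h4
end

section
/- Let p : Fin k × Fin l → ℝ be strictly positive with marginals p^A, p^B, and suppose (μ,ν,η) with min(μ,ν) ≥ η ≥ 0 satisfies Σᵢⱼ pᵢⱼ^(1+μ+ν−η)·(p^A(i))^(−μ)·(p^B(j))^(−ν) = 1. Let G be a finite tree whose nodes carry values Φ, Ψ^A, Ψ^B defined recursively by Φ(root)=Ψ^A(root)=Ψ^B(root)=1 and for the child w of v labeled (i,j): Φ(w)=Φ(v)·pᵢⱼ, Ψ^A(w)=Ψ^A(v)·p^A(i), Ψ^B(w)=Ψ^B(v)·p^B(j). Then for any antichain S of nodes (no node in S is an ancestor of another), Σ_{v∈S} Φ(v)^(1+μ+ν−η)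 · Ψ^A(v)^(−μ) · Ψ^B(v)^(−ν) ≤ 1. -/
/-!
A node is the word of labels on its path from the root, and the summand is the product over
these labels of the letter weight `p ^ (1 + μ + ν - η) * pᴬ ^ (-μ) * pᴮ ^ (-ν)`, whose total is
`1` by the normalization. The claim is therefore Kraft's inequality for prefix-free sets of words:
split the antichain according to the first letter and induct on the depth.
-/

open Finset

lemma IsAntichain.eq_singleton_nil {α : Type*} {S : Set (List α)}
    (hS : IsAntichain List.IsPrefix S) (hnil : [] ∈ S) : S = {[]} :=
  Set.eq_singleton_iff_unique_mem.mpr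
    ⟨hnil, fun _ hv => by_contra fun hne => hS hnil hv (Ne.symm hne) List.nil_prefix⟩

namespace List

variable {α : Type*}

def consPrefixEmbedding (a : α) : @IsPrefix α ↪r @IsPrefix α where
  toFun := (a :: ·)
  inj' := cons_injective
  map_rel_iff' := by simp

lemma sum_eq_sum_sum_preimage_cons [Fintype α] {M : Type*} [AddCommMonoid M]
    {S : Finset (List α)} (hS : [] ∉ S) (f : List α → M) :
    ∑ v ∈ S, f v = ∑ a, ∑ t ∈ S.preimage (a :: ·) cons_injective.injOn, f (a :: t) := by
  classical
  rw [← sum_fiberwise S head? f, Fintype.sum_option]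
  have hnone : S.filter (fun v => v.head? = none) = ∅ :=
    filter_eq_empty_iff.mpr fun v hv h => hS (head?_eq_none_iff.mp h ▸ hv)
  rw [hnone, sum_empty, zero_add]
  refine sum_congr rfl fun a _ => ?_
  rw [sum_preimage']
  congr! 2 with v
  simp [head?_eq_some_iff, eq_comm]

variable {R : Type*} [CommSemiring R] [PartialOrder R] [IsOrderedRing R]

lemma sum_prod_map_le_one_of_length_le [Fintype α] {w : α → R} (hw : ∀ a, 0 ≤ w a)
    (hsum : ∑ a, w a ≤ 1) (n : ℕ) {S : Finset (List α)}
    (hS : IsAntichain IsPrefix (S : Set (List α))) (hlen : ∀ v ∈ S, v.length ≤ n) :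
    ∑ v ∈ S, (v.map w).prod ≤ 1 := by
  induction n generalizing S with
  | zero =>
    have hS : S ⊆ {[]} := fun v hv => by simpa using hlen v hv
    obtain rfl | rfl := Finset.subset_singleton_iff.mp hS <;> simp
  | succ n ih =>
    by_cases hnil : [] ∈ S
    · rw [coe_eq_singleton.mp (hS.eq_singleton_nil hnil)]
      simp
    rw [sum_eq_sum_sum_preimage_cons hnil]
    calc ∑ a, ∑ t ∈ S.preimage (a :: ·) cons_injective.injOn, ((a :: t).map w).prod
        = ∑ a, w a * ∑ t ∈ S.preimage (a :: ·) cons_injective.injOn, (t.map w).prod := by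
          simp [mul_sum]
      _ ≤ ∑ a, w a * 1 := by
          gcongr with a
          · exact hw a
          refine ih ?_ fun t ht => ?_
          · rw [coe_preimage]
            exact hS.preimage_relEmbedding (consPrefixEmbedding a)
          · simpa using hlen _ (mem_preimage.mp ht)
      _ ≤ 1 := by simpa using hsum

end List

theorem IsAntichain.sum_prod_map_le_one {α R : Type*} [Fintype α] [CommSemiring R]
    [PartialOrder R] [IsOrderedRing R] {w : α → R} (hw : ∀ a, 0 ≤ w a) (hsum : ∑ a, w a ≤ 1)
    {S : Finset (List α)} (hS : IsAntichain List.IsPrefix (S : Set (List α))) :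
    ∑ v ∈ S, (v.map w).prod ≤ 1 :=
  List.sum_prod_map_le_one_of_length_le hw hsum _ hS fun _ hv => le_sup hv

theorem antichain_weighted_sum_le_one_general (k l : ℕ) (p : Fin k × Fin l → ℝ)
    (hpos : ∀ x, 0 < p x)
    (μ ν η : ℝ)
    (hnorm : ∑ x : Fin k × Fin l,
        p x ^ (1 + μ + ν - η) * (∑ j : Fin l, p (x.1, j)) ^ (-μ) *
          (∑ i : Fin k, p (i, x.2)) ^ (-ν) = 1)
    (S : Finset (List (Fin k × Fin l)))
    (hanti : ∀ u ∈ S, ∀ v ∈ S, u ≠ v → ¬ u <+: v) :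
    ∑ v ∈ S,
        ((v.map p).prod) ^ (1 + μ + ν - η) *
          ((v.map fun x => ∑ j : Fin l, p (x.1, j)).prod) ^ (-μ) *
          ((v.map fun x => ∑ i : Fin k, p (i, x.2)).prod) ^ (-ν) ≤ 1 := by
  set pA : Fin k × Fin l → ℝ := fun x => ∑ j, p (x.1, j)
  set pB : Fin k × Fin l → ℝ := fun x => ∑ i, p (i, x.2)
  have hp : ∀ x, 0 ≤ p x := fun x => (hpos x).le
  have hpA : ∀ x, 0 ≤ pA x := fun x => sum_nonneg fun _ _ => hp _
  have hpB : ∀ x, 0 ≤ pB x := fun x => sum_nonneg fun _ _ => hp _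
  have hterm : ∀ v : List (Fin k × Fin l),
      (v.map p).prod ^ (1 + μ + ν - η) * (v.map pA).prod ^ (-μ) * (v.map pB).prod ^ (-ν) =
        (v.map fun x => p x ^ (1 + μ + ν - η) * pA x ^ (-μ) * pB x ^ (-ν)).prod := fun v => by
    rw [List.prod_map_mul, List.prod_map_mul, Real.list_prod_map_rpow' _ _ fun x _ => hp x,
      Real.list_prod_map_rpow' _ _ fun x _ => hpA x, Real.list_prod_map_rpow' _ _ fun x _ => hpB x]
  rw [sum_congr rfl fun v _ => hterm v]
  exact IsAntichain.sum_prod_map_le_one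
    (fun x => mul_nonneg (mul_nonneg (Real.rpow_nonneg (hp x) _) (Real.rpow_nonneg (hpA x) _))
      (Real.rpow_nonneg (hpB x) _)) hnorm.le hanti

theorem antichain_weighted_sum_le_one (k l : ℕ) (p : Fin k × Fin l → ℝ)
    (hpos : ∀ x, 0 < p x)
    (μ ν η : ℝ) (hη : 0 ≤ η) (hημ : η ≤ μ) (hην : η ≤ ν)
    (hnorm : ∑ x : Fin k × Fin l,
        p x ^ (1 + μ + ν - η) * (∑ j : Fin l, p (x.1, j)) ^ (-μ) *
          (∑ i : Fin k, p (i, x.2)) ^ (-ν) = 1)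
    (S : Finset (List (Fin k × Fin l)))
    (hanti : ∀ u ∈ S, ∀ v ∈ S, u ≠ v → ¬ u <+: v) :
    ∑ v ∈ S,
        ((v.map p).prod) ^ (1 + μ + ν - η) *
          ((v.map fun x => ∑ j : Fin l, p (x.1, j)).prod) ^ (-μ) *
          ((v.map fun x => ∑ i : Fin k, p (i, x.2)).prod) ^ (-ν) ≤ 1 :=
  antichain_weighted_sum_le_one_general k l p hpos μ ν η hnorm S hanti
end
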